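/- If P and Q are n×n positive definite real matrices with P > Q (i.e., P − Q positive definite), then ‖P − Q‖ ≤ (e^{δ(P,Q)} − 1)·‖Q‖. -/

import Mathlib

/-!
Write `Q = R²` with `R` positive definite and set `T = R⁻¹ (P - Q) R⁻¹`, which is positive
definite. Then `‖P - Q‖ = ‖R T R‖ ≤ ‖T‖ ‖Q‖`, and `‖T‖` is the largest eigenvalue of `T`. Since
`T` is similar to `P Q⁻¹ - 1`, each eigenvalue `μ` of `T` gives an eigenvalue `μ + 1` of `P Q⁻¹`,
so `μ + 1 ≤ ‖P Q⁻¹‖ = σ_max(P Q⁻¹) ≤ e^{δ(P,Q)}`.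
-/

open Matrix

noncomputable def singVals {n : ℕ} (M : Matrix (Fin n) (Fin n) ℝ) (i : Fin n) : ℝ :=
  Real.sqrt ((Matrix.isHermitian_conjTranspose_mul_self M).eigenvalues i)

noncomputable def rdist {n : ℕ} (P Q : Matrix (Fin n) (Fin n) ℝ) : ℝ :=
  Real.sqrt (∑ i, (Real.log (singVals (P * Q⁻¹) i)) ^ 2)

noncomputable def matSpectralNorm {m n : ℕ} (M : Matrix (Fin m) (Fin n) ℝ) : ℝ :=
  ‖(LinearMap.toContinuousLinearMap (Matrix.toEuclideanLin M))‖

open scoped Matrix.Norms.L2Operator ComplexOrder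

lemma IsSelfAdjoint.norm_mul_mul_self_le {A : Type*} [NonUnitalNormedRing A] [StarRing A]
    [CStarRing A] {r : A} (hr : IsSelfAdjoint r) (x : A) : ‖r * x * r‖ ≤ ‖x‖ * ‖r * r‖ :=
  calc ‖r * x * r‖ ≤ ‖r‖ * ‖x‖ * ‖r‖ := norm_mul₃_le
    _ = ‖x‖ * ‖star r * r‖ := by rw [CStarRing.norm_star_mul_self]; ring
    _ = ‖x‖ * ‖r * r‖ := by rw [hr.star_eq]

lemma spectrum.units_inv_mul_mul_inv {R A : Type*} [CommSemiring R] [Ring A] [Algebra R A]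
    (u : Aˣ) (a : A) : spectrum R (↑u⁻¹ * a * ↑u⁻¹) = spectrum R (a * ↑(u * u)⁻¹) := by
  rw [← spectrum.units_conjugate (u := u)]
  simp [mul_assoc]

namespace Matrix

variable {𝕜 n : Type*} [RCLike 𝕜] [Fintype n] [DecidableEq n]

lemma spectrum_inv_mul_mul_inv {U : Matrix n n 𝕜} (hU : IsUnit U) (X : Matrix n n 𝕜) :
    spectrum ℝ (U⁻¹ * X * U⁻¹) = spectrum ℝ (X * (U * U)⁻¹) := by
  lift U to (Matrix n n 𝕜)ˣ using hU
  rw [← Units.val_mul, ← coe_units_inv, ← coe_units_inv]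
  exact spectrum.units_inv_mul_mul_inv U X

lemma norm_le_l2_opNorm_of_mem_spectrum {A : Matrix n n 𝕜} {μ : 𝕜} (hμ : μ ∈ spectrum 𝕜 A) :
    ‖μ‖ ≤ ‖A‖ := by
  cases isEmpty_or_nonempty n
  · simp [spectrum.of_subsingleton] at hμ
  · exact spectrum.norm_le_norm_of_mem hμ

lemma IsHermitian.l2_opNorm_eq {A : Matrix n n 𝕜} (hA : A.IsHermitian) :
    ‖A‖ = ‖hA.eigenvalues‖ := by
  conv_lhs => rw [hA.spectral_theorem, Unitary.conjStarAlgAut_apply]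
  rw [CStarRing.norm_mul_mem_unitary _ (Unitary.star_mem hA.eigenvectorUnitary.2),
    CStarRing.norm_mem_unitary_mul _ hA.eigenvectorUnitary.2, l2_opNorm_diagonal]
  simp [Pi.norm_def]

lemma PosSemidef.l2_opNorm_le_of_spectrum_le {A : Matrix n n 𝕜} (hA : A.PosSemidef) {c : ℝ}
    (hc : 0 ≤ c) (h : ∀ μ ∈ spectrum ℝ A, μ ≤ c) : ‖A‖ ≤ c := by
  rw [hA.isHermitian.l2_opNorm_eq, pi_norm_le_iff_of_nonneg hc]
  intro i
  rw [Real.norm_eq_abs, abs_of_nonneg (hA.eigenvalues_nonneg i)]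
  exact h _ (hA.isHermitian.eigenvalues_mem_spectrum_real i)

open scoped MatrixOrder in
lemma PosDef.exists_sqrt {Q : Matrix n n 𝕜} (hQ : Q.PosDef) :
    ∃ R : Matrix n n 𝕜, R.PosDef ∧ R * R = Q :=
  ⟨CFC.sqrt Q, hQ.isStrictlyPositive.sqrt.posDef, CFC.sqrt_mul_sqrt_self Q hQ.posSemidef.nonneg⟩

lemma PosDef.l2_opNorm_le_mul_of_spectrum_le {Q X : Matrix n n 𝕜} (hQ : Q.PosDef)
    (hX : X.PosSemidef) {c : ℝ} (hc : 0 ≤ c) (h : ∀ μ ∈ spectrum ℝ (X * Q⁻¹), μ ≤ c) :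
    ‖X‖ ≤ c * ‖Q‖ := by
  obtain ⟨R, hR, rfl⟩ := hQ.exists_sqrt
  have hdet : IsUnit R.det := (isUnit_iff_isUnit_det R).mp hR.isUnit
  set T := R⁻¹ * X * R⁻¹
  have hT : T.PosSemidef := by
    simpa only [hR.inv.isHermitian.eq] using hX.conjTranspose_mul_mul_same R⁻¹
  have hXT : X = R * T * R := by
    simp only [T, mul_assoc, mul_nonsing_inv_cancel_left _ _ hdet, nonsing_inv_mul _ hdet, mul_one]
  have hTc : ‖T‖ ≤ c := hT.l2_opNorm_le_of_spectrum_le hc fun μ hμ =>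
    h μ (by rwa [spectrum_inv_mul_mul_inv hR.isUnit] at hμ)
  calc ‖X‖ = ‖R * T * R‖ := by rw [← hXT]
    _ ≤ ‖T‖ * ‖R * R‖ := hR.isHermitian.isSelfAdjoint.norm_mul_mul_self_le T
    _ ≤ c * ‖R * R‖ := mul_le_mul_of_nonneg_right hTc (norm_nonneg _)

end Matrix

lemma Matrix.l2_opNorm_le_of_singVals_le {n : ℕ} {M : Matrix (Fin n) (Fin n) ℝ} {c : ℝ}
    (hc : 0 ≤ c) (h : ∀ i, singVals M i ≤ c) : ‖M‖ ≤ c := by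
  have hMM := isHermitian_conjTranspose_mul_self M
  have heig : ∀ i, hMM.eigenvalues i = singVals M i ^ 2 := fun i =>
    (Real.sq_sqrt ((posSemidef_conjTranspose_mul_self M).eigenvalues_nonneg i)).symm
  rw [mul_self_le_mul_self_iff (norm_nonneg _) hc, ← l2_opNorm_conjTranspose_mul_self,
    hMM.l2_opNorm_eq, pi_norm_le_iff_of_nonneg (mul_self_nonneg c)]
  intro i
  rw [Real.norm_eq_abs, heig, abs_sq, sq]
  exact mul_self_le_mul_self (Real.sqrt_nonneg _) (h i)

lemma singVals_le_exp_rdist {n : ℕ} (P Q : Matrix (Fin n) (Fin n) ℝ) (i : Fin n) :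
    singVals (P * Q⁻¹) i ≤ Real.exp (rdist P Q) :=
  -- `Real.le_exp_log` also covers a vanishing singular value, where `Real.log 0 = 0`
  calc singVals (P * Q⁻¹) i ≤ Real.exp (Real.log (singVals (P * Q⁻¹) i)) := Real.le_exp_log _
    _ ≤ Real.exp (rdist P Q) := by
      refine Real.exp_le_exp.mpr ((le_abs_self _).trans (Real.abs_le_sqrt ?_))
      exact Finset.single_le_sum (f := fun j => Real.log (singVals (P * Q⁻¹) j) ^ 2)
        (fun j _ => sq_nonneg _) (Finset.mem_univ i)

lemma l2_opNorm_mul_inv_le_exp_rdist {n : ℕ} (P Q : Matrix (Fin n) (Fin n) ℝ) :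
    ‖P * Q⁻¹‖ ≤ Real.exp (rdist P Q) :=
  Matrix.l2_opNorm_le_of_singVals_le (Real.exp_pos _).le (singVals_le_exp_rdist P Q)

theorem norm_sub_le_of_rdist_general {n : ℕ} (P Q : Matrix (Fin n) (Fin n) ℝ)
    (hQ : Q.PosDef) (hPQ : (P - Q).PosDef) :
    matSpectralNorm (P - Q) ≤ (Real.exp (rdist P Q) - 1) * matSpectralNorm Q := by
  have hδ : 0 ≤ Real.exp (rdist P Q) - 1 := sub_nonneg.mpr (Real.one_le_exp (Real.sqrt_nonneg _))
  refine hQ.l2_opNorm_le_mul_of_spectrum_le hPQ.posSemidef hδ fun μ hμ => ?_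
  have hμ1 : μ + 1 ∈ spectrum ℝ (P * Q⁻¹) := by
    rw [sub_mul, Matrix.mul_nonsing_inv _ ((Matrix.isUnit_iff_isUnit_det Q).mp hQ.isUnit)] at hμ
    rwa [spectrum.add_mem_iff, map_one, neg_add_eq_sub]
  have hμ1_le := (Matrix.norm_le_l2_opNorm_of_mem_spectrum hμ1).trans
    (l2_opNorm_mul_inv_le_exp_rdist P Q)
  linarith [le_abs_self (μ + 1), Real.norm_eq_abs (μ + 1)]

/-- If P > Q (i.e. P − Q positive definite), then
    ‖P − Q‖ ≤ (e^{δ(P,Q)} − 1)·‖Q‖. -/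
theorem norm_sub_le_of_rdist {n : ℕ} (P Q : Matrix (Fin n) (Fin n) ℝ)
    (hP : P.PosDef) (hQ : Q.PosDef) (hPQ : (P - Q).PosDef) :
    matSpectralNorm (P - Q) ≤ (Real.exp (rdist P Q) - 1) * matSpectralNorm Q :=
  norm_sub_le_of_rdist_general P Q hQ hPQ
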